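/- (Averaged trace-norm bound) Let {Aᵢ} be a finite family of matrices and let i be a random index with probability distribution pᵢ. Then E_{i∼p} ‖Aᵢ‖₁ ≤ Tr √(E_{i∼p}[Aᵢ Aᵢ†]). -/

import Mathlib

open Matrix
open scoped ComplexOrder

namespace Matrix.PosSemidef

/-- The positive semidefinite square root of a positive semidefinite matrix (definition from the
older Mathlib, removed since). -/
noncomputable def sqrt {n 𝕜 : Type*} [Fintype n] [RCLike 𝕜] [DecidableEq n] {A : Matrix n n 𝕜}
    (hA : PosSemidef A) : Matrix n n 𝕜 :=
  hA.1.eigenvectorUnitary.1 * diagonal ((↑) ∘ (√·) ∘ hA.1.eigenvalues) *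
  (star hA.1.eigenvectorUnitary : Matrix n n 𝕜)

theorem posSemidef_sqrt {n 𝕜 : Type*} [Fintype n] [RCLike 𝕜] [DecidableEq n] {A : Matrix n n 𝕜}
    (hA : PosSemidef A) : PosSemidef hA.sqrt := by
  unfold sqrt
  have h : PosSemidef (diagonal (((↑) ∘ (√·) ∘ hA.1.eigenvalues) : n → 𝕜)) :=
    posSemidef_diagonal_iff.mpr fun i => by
      simp only [Function.comp_apply, RCLike.ofReal_nonneg]; exact Real.sqrt_nonneg _
  have := h.mul_mul_conjTranspose_same (hA.1.eigenvectorUnitary : Matrix n n 𝕜)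
  simpa [Matrix.star_eq_conjTranspose] using this

end Matrix.PosSemidef

/-- Trace norm of a complex matrix: `Tr √(Aᴴ A)`. -/
noncomputable def traceNorm {n : Type*} [Fintype n] [DecidableEq n]
    (A : Matrix n n ℂ) : ℝ :=
  ((Matrix.posSemidef_conjTranspose_mul_self A).sqrt.trace).re

/-- Positive semidefinite square root (for PSD inputs): `(AᴴA)^{1/4}`, which equals
`√A` whenever `A` is positive semidefinite. -/
noncomputable def msqrt {n : Type*} [Fintype n] [DecidableEq n]
    (A : Matrix n n ℂ) : Matrix n n ℂ :=
  (Matrix.posSemidef_conjTranspose_mul_self A).posSemidef_sqrt.sqrt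

/-!
For `S` positive definite and `T` Hermitian, expanding `(S⁻¹T - 1)ᴴ S (S⁻¹T - 1) ≥ 0` gives
`2 Tr T ≤ Tr S + Tr (S⁻¹ T²)`. Apply this to `Tᵢ = √(Aᵢ Aᵢᴴ)`, whose trace is `‖Aᵢ‖₁` because
`Aᵢ Aᵢᴴ` and `Aᵢᴴ Aᵢ` have the same characteristic polynomial, and average over `i ∼ p`:
with `B = E[Aᵢ Aᵢᴴ]`, `2 E ‖Aᵢ‖₁ ≤ Tr S + Tr (S⁻¹ B)`. For `S = √(B + ε)` one has
`Tr (S⁻¹ B) = Tr S - ε Tr S⁻¹ ≤ Tr S`, so `E ‖Aᵢ‖₁ ≤ Tr √(B + ε)`; let `ε → 0`.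
-/

open scoped MatrixOrder
open Filter Topology

namespace Matrix

variable {n 𝕜 : Type*} [Fintype n] [RCLike 𝕜]

lemma posSemidef_sum_smul_mul_conjTranspose {ι : Type*} [Fintype ι] (A : ι → Matrix n n 𝕜)
    {p : ι → ℝ} (hp : ∀ i, 0 ≤ p i) : (∑ i, p i • (A i * (A i)ᴴ)).PosSemidef :=
  posSemidef_sum _ fun i _ => (posSemidef_self_mul_conjTranspose (A i)).smul (hp i)

variable [DecidableEq n]

lemma IsHermitian.trace_cfc {A : Matrix n n 𝕜} (hA : A.IsHermitian) (f : ℝ → ℝ) :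
    (cfc f A).trace = ∑ i, (f (hA.eigenvalues i) : 𝕜) := by
  rw [hA.cfc_eq, IsHermitian.cfc, Unitary.conjStarAlgAut_apply, trace_mul_cycle,
    Unitary.coe_star_mul_self, one_mul, trace_diagonal]
  rfl

namespace PosSemidef

lemma sqrt_eq_cfc {A : Matrix n n 𝕜} (hA : A.PosSemidef) : hA.sqrt = cfc Real.sqrt A := by
  rw [hA.1.cfc_eq, IsHermitian.cfc, Unitary.conjStarAlgAut_apply]
  rfl

lemma sqrt_eq_cfcSqrt {A : Matrix n n 𝕜} (hA : A.PosSemidef) : hA.sqrt = CFC.sqrt A := by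
  rw [sqrt_eq_cfc, CFC.sqrt_eq_real_sqrt A hA.nonneg, cfcₙ_eq_cfc]

lemma re_trace_sqrt {A : Matrix n n 𝕜} (hA : A.PosSemidef) :
    RCLike.re hA.sqrt.trace = ∑ i, √(hA.1.eigenvalues i) := by
  simp [sqrt_eq_cfc, hA.1.trace_cfc]

lemma sqrt_mul_self {A : Matrix n n 𝕜} (hA : A.PosSemidef) : hA.sqrt * hA.sqrt = A := by
  rw [sqrt_eq_cfcSqrt, CFC.sqrt_mul_sqrt_self A hA.nonneg]

lemma posDef_cfc_sqrt_add {B : Matrix n n 𝕜} (hB : B.PosSemidef) {ε : ℝ} (hε : 0 < ε) :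
    (cfc (fun x => √(x + ε)) B).PosDef := by
  have hspec : ∀ x ∈ spectrum ℝ B, 0 ≤ x := spectrum_nonneg_of_nonneg hB.nonneg
  refine (cfc_nonneg fun x _ => Real.sqrt_nonneg _).posSemidef.posDef_iff_isUnit.mpr ?_
  refine (isUnit_cfc_iff _ B).mpr fun x hx => ?_
  have := hspec x hx
  positivity

lemma cfc_sqrt_add_mul_self {B : Matrix n n 𝕜} (hB : B.PosSemidef) {ε : ℝ} (hε : 0 ≤ ε) :
    cfc (fun x => √(x + ε)) B * cfc (fun x => √(x + ε)) B = B + algebraMap ℝ _ ε := by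
  have hspec : ∀ x ∈ spectrum ℝ B, 0 ≤ x := spectrum_nonneg_of_nonneg hB.nonneg
  calc _ = cfc (fun x => x + ε) B :=
        (cfc_mul ..).symm.trans <|
          cfc_congr fun x hx => Real.mul_self_sqrt (add_nonneg (hspec x hx) hε)
    _ = B + algebraMap ℝ _ ε := by rw [cfc_add_const ε (fun x => x) B, cfc_id' ℝ B]

end PosSemidef

lemma PosDef.re_trace_inv_mul_le {S B : Matrix n n 𝕜} (hS : S.PosDef) {ε : ℝ} (hε : 0 ≤ ε)
    (hSB : S * S = B + algebraMap ℝ _ ε) :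
    RCLike.re (S⁻¹ * B).trace ≤ RCLike.re S.trace := by
  have hdet : IsUnit S.det := (isUnit_iff_isUnit_det S).mp hS.isUnit
  have hB : S⁻¹ * B = S - ε • S⁻¹ := by
    rw [eq_sub_of_add_eq hSB.symm, Matrix.mul_sub, ← Matrix.mul_assoc, nonsing_inv_mul _ hdet,
      Matrix.one_mul, Algebra.algebraMap_eq_smul_one, Matrix.mul_smul, Matrix.mul_one]
  have := (RCLike.nonneg_iff.mp hS.inv.posSemidef.trace_nonneg).1
  rw [hB, trace_sub, trace_smul, map_sub, RCLike.real_smul_eq_coe_mul, RCLike.re_ofReal_mul]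
  nlinarith

lemma PosDef.two_mul_re_trace_le {S T : Matrix n n 𝕜} (hS : S.PosDef) (hT : T.IsHermitian) :
    2 * RCLike.re T.trace ≤ RCLike.re S.trace + RCLike.re (S⁻¹ * (T * T)).trace := by
  have hdet : IsUnit S.det := (isUnit_iff_isUnit_det S).mp hS.isUnit
  have hconj : ((S⁻¹ * T - 1)ᴴ * S * (S⁻¹ * T - 1)).PosSemidef :=
    hS.posSemidef.conjTranspose_mul_mul_same _
  have hexpand : (S⁻¹ * T - 1)ᴴ * S * (S⁻¹ * T - 1) = T * S⁻¹ * T - T - T + S := by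
    rw [conjTranspose_sub, conjTranspose_mul, conjTranspose_nonsing_inv, hS.1, hT,
      conjTranspose_one]
    simp only [Matrix.sub_mul, Matrix.mul_sub, Matrix.mul_assoc, nonsing_inv_mul _ hdet,
      mul_nonsing_inv_cancel_left _ _ hdet, Matrix.one_mul, Matrix.mul_one]
    abel
  have := (RCLike.nonneg_iff.mp hconj.trace_nonneg).1
  rw [hexpand, trace_add, trace_sub, trace_sub, trace_mul_cycle, trace_mul_comm] at this
  simp only [map_add, map_sub] at this
  linarith

lemma PosDef.two_mul_sum_mul_re_trace_le {ι : Type*} [Fintype ι] {S : Matrix n n 𝕜}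
    (hS : S.PosDef) {T : ι → Matrix n n 𝕜} (hT : ∀ i, (T i).IsHermitian) {p : ι → ℝ}
    (hp : ∀ i, 0 ≤ p i) (hp1 : ∑ i, p i = 1) :
    2 * ∑ i, p i * RCLike.re (T i).trace ≤
      RCLike.re S.trace + RCLike.re (S⁻¹ * ∑ i, p i • (T i * T i)).trace := by
  calc 2 * ∑ i, p i * RCLike.re (T i).trace
      = ∑ i, p i * (2 * RCLike.re (T i).trace) := by rw [Finset.mul_sum]; ring_nf
    _ ≤ ∑ i, p i * (RCLike.re S.trace + RCLike.re (S⁻¹ * (T i * T i)).trace) :=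
        Finset.sum_le_sum fun i _ =>
          mul_le_mul_of_nonneg_left (hS.two_mul_re_trace_le (hT i)) (hp i)
    _ = _ := by
        simp [mul_add, Finset.sum_add_distrib, ← Finset.sum_mul, hp1, Matrix.mul_sum, trace_sum,
          trace_smul, RCLike.smul_re]

end Matrix

section

variable {n : Type*} [Fintype n] [DecidableEq n]

lemma msqrt_eq_sqrt {B : Matrix n n ℂ} (hB : B.PosSemidef) : msqrt B = hB.sqrt := by
  rw [msqrt, PosSemidef.sqrt_eq_cfcSqrt, PosSemidef.sqrt_eq_cfcSqrt, hB.1.eq,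
    CFC.sqrt_mul_self B hB.nonneg, hB.sqrt_eq_cfcSqrt]

lemma traceNorm_eq_re_trace_sqrt_self_mul_conjTranspose (A : Matrix n n ℂ) :
    traceNorm A = ((posSemidef_self_mul_conjTranspose A).sqrt.trace).re := by
  rw [traceNorm, ← RCLike.re_to_complex, ← RCLike.re_to_complex, PosSemidef.re_trace_sqrt,
    PosSemidef.re_trace_sqrt,
    (IsHermitian.eigenvalues_eq_eigenvalues_iff _ _).mpr (charpoly_mul_comm _ _)]

lemma sum_mul_traceNorm_le_sum_sqrt_eigenvalues_add {ι : Type*} [Fintype ι]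
    (A : ι → Matrix n n ℂ) {p : ι → ℝ} (hp : ∀ i, 0 ≤ p i) (hp1 : ∑ i, p i = 1)
    (hB : (∑ i, p i • (A i * (A i)ᴴ)).PosSemidef)
    {ε : ℝ} (hε : 0 < ε) :
    ∑ i, p i * traceNorm (A i) ≤ ∑ k, √(hB.1.eigenvalues k + ε) := by
  set S := cfc (fun x => √(x + ε)) (∑ i, p i • (A i * (A i)ᴴ))
  have hS : S.PosDef := hB.posDef_cfc_sqrt_add hε
  have hvar := hS.two_mul_sum_mul_re_trace_le
    (fun i => (posSemidef_self_mul_conjTranspose (A i)).posSemidef_sqrt.1) hp hp1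
  simp only [PosSemidef.sqrt_mul_self] at hvar
  have hinv := hS.re_trace_inv_mul_le hε.le (hB.cfc_sqrt_add_mul_self hε.le)
  have htr : RCLike.re S.trace = ∑ k, √(hB.1.eigenvalues k + ε) := by
    simp [S, hB.1.trace_cfc]
  simp only [traceNorm_eq_re_trace_sqrt_self_mul_conjTranspose, ← RCLike.re_to_complex]
  linarith

end

/-- Averaged trace-norm bound: for a finite family `{Aᵢ}` of matrices and a random
index `i ∼ p`, `E_{i∼p} ‖Aᵢ‖₁ ≤ Tr √(E_{i∼p}[Aᵢ Aᵢᴴ])`. -/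
theorem averaged_trace_norm_bound {d : ℕ} {ι : Type*} [Fintype ι]
    (A : ι → Matrix (Fin d) (Fin d) ℂ)
    (p : ι → ℝ) (hp : ∀ i, 0 ≤ p i) (hp1 : ∑ i, p i = 1) :
    (∑ i, p i * traceNorm (A i))
      ≤ ((msqrt (∑ i, p i • (A i * (A i)ᴴ))).trace).re := by
  have hB := posSemidef_sum_smul_mul_conjTranspose A hp
  rw [msqrt_eq_sqrt hB, ← RCLike.re_to_complex, hB.re_trace_sqrt]
  have hlim : Tendsto (fun ε => ∑ k, √(hB.1.eigenvalues k + ε)) (𝓝[>] 0)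
      (𝓝 (∑ k, √(hB.1.eigenvalues k))) :=
    tendsto_nhdsWithin_of_tendsto_nhds <| (by fun_prop : Continuous _).tendsto' 0 _ (by simp)
  exact ge_of_tendsto hlim <| eventually_nhdsWithin_of_forall fun ε hε =>
    sum_mul_traceNorm_le_sum_sqrt_eigenvalues_add A hp hp1 hB hε
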